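/- arXiv:2107.06253 — 6 statements merged into one kernel-verified Lean document; each statement's English description precedes it below -/
import Mathlib

section
/- For the simple ML-like language with unit, pairs, sums, switch, and a single recursive function symbol f, if an expression e evaluates to value v under the standard big-step semantics and every recursive call made during this evaluation (i.e., every pair (v₁, v₂) such that a subderivation applies f to v₁ yielding v₂) satisfies the ground specification φ (i.e., f(v₁) = v₂ is consistent with φ), then e evaluates to v under the angelic semantics relative to φ. -/
/-- Values of the simple ML-like language: unit, pairs, sums. -/
inductive Val : Type
  | unit : Val
  | pair : Val → Val → Val
  | inl  : Val → Val
  | inr  : Val → Val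

/-- Expressions of the simple ML-like language with a single recursive
function symbol `f` (written `app e` for `f e`) and a single variable `x`. -/
inductive Expr : Type
  | var    : Expr
  | app    : Expr → Expr
  | unit   : Expr
  | pair   : Expr → Expr → Expr
  | fst    : Expr → Expr
  | snd    : Expr → Expr
  | inl    : Expr → Expr
  | inr    : Expr → Expr
  | unl    : Expr → Expr
  | unr    : Expr → Expr
  | switch : Expr → Expr → Expr → Expr

/-- Standard big-step semantics `e ⇓ v` for the program `rec f(x) = body`,
with `env` the value currently substituted for `x`.  A recursive call
`f e` unfolds `body` at the value of `e`. -/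
inductive Eval (body : Expr) : Val → Expr → Val → Prop
  | var {env} : Eval body env .var env
  | app {env e v v'} : Eval body env e v → Eval body v body v' →
      Eval body env (.app e) v'
  | unit {env} : Eval body env .unit .unit
  | pair {env e1 e2 v1 v2} : Eval body env e1 v1 → Eval body env e2 v2 →
      Eval body env (.pair e1 e2) (.pair v1 v2)
  | fst {env e v1 v2} : Eval body env e (.pair v1 v2) → Eval body env (.fst e) v1
  | snd {env e v1 v2} : Eval body env e (.pair v1 v2) → Eval body env (.snd e) v2
  | inl {env e v} : Eval body env e v → Eval body env (.inl e) (.inl v)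
  | inr {env e v} : Eval body env e v → Eval body env (.inr e) (.inr v)
  | unl {env e v} : Eval body env e (.inl v) → Eval body env (.unl e) v
  | unr {env e v} : Eval body env e (.inr v) → Eval body env (.unr e) v
  | switchL {env e3 e1 e2 v3 v1} : Eval body env e3 (.inl v3) →
      Eval body env e1 v1 → Eval body env (.switch e3 e1 e2) v1
  | switchR {env e3 e1 e2 v3 v2} : Eval body env e3 (.inr v3) →
      Eval body env e2 v2 → Eval body env (.switch e3 e1 e2) v2

/-- A ground specification over the uninterpreted function symbol `f`,
modelled semantically as the set of its models (interpretations of `f`). -/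
def Spec : Type := (Val → Val) → Prop

/-- `SAT(φ ∧ f(v) = v')`: the formula `φ` together with `f(v) = v'`
is satisfiable. -/
def Spec.sat (φ : Spec) (v v' : Val) : Prop := ∃ g : Val → Val, φ g ∧ g v = v'

/-- Angelic big-step semantics `e ⇓^φ v` relative to the ground
specification `φ`: a recursive call `f e` may return any value `v'`
such that `φ ∧ f(v) = v'` is satisfiable, where `e ⇓^φ v`. -/
inductive AEval (φ : Spec) : Val → Expr → Val → Prop
  | var {env} : AEval φ env .var env
  | app {env e v v'} : AEval φ env e v → φ.sat v v' → AEval φ env (.app e) v'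
  | unit {env} : AEval φ env .unit .unit
  | pair {env e1 e2 v1 v2} : AEval φ env e1 v1 → AEval φ env e2 v2 →
      AEval φ env (.pair e1 e2) (.pair v1 v2)
  | fst {env e v1 v2} : AEval φ env e (.pair v1 v2) → AEval φ env (.fst e) v1
  | snd {env e v1 v2} : AEval φ env e (.pair v1 v2) → AEval φ env (.snd e) v2
  | inl {env e v} : AEval φ env e v → AEval φ env (.inl e) (.inl v)
  | inr {env e v} : AEval φ env e v → AEval φ env (.inr e) (.inr v)
  | unl {env e v} : AEval φ env e (.inl v) → AEval φ env (.unl e) v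
  | unr {env e v} : AEval φ env e (.inr v) → AEval φ env (.unr e) v
  | switchL {env e3 e1 e2 v3 v1} : AEval φ env e3 (.inl v3) →
      AEval φ env e1 v1 → AEval φ env (.switch e3 e1 e2) v1
  | switchR {env e3 e1 e2 v3 v2} : AEval φ env e3 (.inr v3) →
      AEval φ env e2 v2 → AEval φ env (.switch e3 e1 e2) v2

/-- `Respects(e ⇓ v, φ)`: the standard big-step semantics, additionally
requiring at every recursive call with argument `v` and result `v'`
that `φ ∧ f(v) = v'` is satisfiable. -/
inductive Respects (φ : Spec) (body : Expr) : Val → Expr → Val → Prop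
  | var {env} : Respects φ body env .var env
  | app {env e v v'} : Respects φ body env e v → Respects φ body v body v' →
      φ.sat v v' → Respects φ body env (.app e) v'
  | unit {env} : Respects φ body env .unit .unit
  | pair {env e1 e2 v1 v2} : Respects φ body env e1 v1 → Respects φ body env e2 v2 →
      Respects φ body env (.pair e1 e2) (.pair v1 v2)
  | fst {env e v1 v2} : Respects φ body env e (.pair v1 v2) →
      Respects φ body env (.fst e) v1
  | snd {env e v1 v2} : Respects φ body env e (.pair v1 v2) →
      Respects φ body env (.snd e) v2
  | inl {env e v} : Respects φ body env e v → Respects φ body env (.inl e) (.inl v)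
  | inr {env e v} : Respects φ body env e v → Respects φ body env (.inr e) (.inr v)
  | unl {env e v} : Respects φ body env e (.inl v) → Respects φ body env (.unl e) v
  | unr {env e v} : Respects φ body env e (.inr v) → Respects φ body env (.unr e) v
  | switchL {env e3 e1 e2 v3 v1} : Respects φ body env e3 (.inl v3) →
      Respects φ body env e1 v1 → Respects φ body env (.switch e3 e1 e2) v1
  | switchR {env e3 e1 e2 v3 v2} : Respects φ body env e3 (.inr v3) →
      Respects φ body env e2 v2 → Respects φ body env (.switch e3 e1 e2) v2

/-- If `e` evaluates to `v` under the standard semantics and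
every recursive call made during this evaluation is consistent with the
ground specification `φ` (i.e. `Respects(e ⇓ v, φ)` holds), then `e`
evaluates to `v` under the angelic semantics relative to `φ`. -/
theorem respects_implies_angelic (φ : Spec) (body : Expr) (env : Val)
    (e : Expr) (v : Val) (h : Respects φ body env e v) : AEval φ env e v := by
  induction h with
  | var => exact .var
  | app _ _ hsat _ ih2 => exact .app ‹_› hsat
  | unit => exact .unit
  | pair _ _ ih1 ih2 => exact .pair ih1 ih2
  | fst _ ih => exact .fst ih
  | snd _ ih => exact .snd ih
  | inl _ ih => exact .inl ih
  | inr _ ih => exact .inr ih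
  | unl _ ih => exact .unl ih
  | unr _ ih => exact .unr ih
  | switchL _ _ ih1 ih2 => exact .switchL ih1 ih2
  | switchR _ _ ih1 ih2 => exact .switchR ih1 ih2
end

section
/- If a recursive program P = rec f(x) = e satisfies a ground specification φ under the standard semantics (i.e., substituting P's input-output behavior for the uninterpreted symbol f makes φ true), then for all values v, v' with P(v) evaluating to v' under the standard semantics, the judgment Respects(P(v) ⇓ v', φ) holds: every recursive call performed in the evaluation is consistent with φ. -/
/-- `F` is the (total) standard input-output semantics of the program
`rec f(x) = body`. -/
def Agrees (body : Expr) (F : Val → Val) : Prop := ∀ v, Eval body v body (F v)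

/-- `P ⊨ φ`: the program `rec f(x) = body` satisfies the ground
specification `φ` under the standard semantics, i.e. substituting the
input-output behaviour of the program for `f` makes `φ` true. -/
def Sat (body : Expr) (φ : Spec) : Prop := ∃ F : Val → Val, Agrees body F ∧ φ F

theorem Eval.deterministic {body : Expr} {env : Val} {e : Expr} {v₁ v₂ : Val}
    (h₁ : Eval body env e v₁) (h₂ : Eval body env e v₂) : v₁ = v₂ := by
  induction h₁ generalizing v₂ with
  | app _ _ ih₁ ih₂ =>
    cases h₂ with
    | app h h' => exact ih₂ (ih₁ h ▸ h')
  | switchL _ _ ih₃ ih =>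
    cases h₂ with
    | switchL _ h => exact ih h
    | switchR h _ => cases ih₃ h
  | switchR _ _ ih₃ ih =>
    cases h₂ with
    | switchL h _ => cases ih₃ h
    | switchR _ h => exact ih h
  | _ => cases h₂; grind

theorem Eval.respects {φ : Spec} {body : Expr}
    (hcall : ∀ v v', Eval body v body v' → φ.sat v v') {env : Val} {e : Expr} {v : Val}
    (h : Eval body env e v) : Respects φ body env e v := by
  induction h with
  | var => exact .var
  | app _ hbody ih₁ ih₂ => exact .app ih₁ ih₂ (hcall _ _ hbody)
  | unit => exact .unit
  | pair _ _ ih₁ ih₂ => exact .pair ih₁ ih₂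
  | fst _ ih => exact .fst ih
  | snd _ ih => exact .snd ih
  | inl _ ih => exact .inl ih
  | inr _ ih => exact .inr ih
  | unl _ ih => exact .unl ih
  | unr _ ih => exact .unr ih
  | switchL _ _ ih₁ ih₂ => exact .switchL ih₁ ih₂
  | switchR _ _ ih₁ ih₂ => exact .switchR ih₁ ih₂

/-- The model of `φ ∧ f(v) = v'` is `⟦P⟧` itself: by determinism, `⟦P⟧ v = v'`. -/
theorem Sat.sat_of_eval {body : Expr} {φ : Spec} (hsat : Sat body φ) {v v' : Val}
    (h : Eval body v body v') : φ.sat v v' := by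
  obtain ⟨F, hF, hφ⟩ := hsat
  exact ⟨F, hφ, (hF v).deterministic h⟩

/-- If the program `P = rec f(x) = body` satisfies the ground
specification `φ` under the standard semantics, then for all values `v, v'`
with `P(v)` evaluating to `v'` under the standard semantics, the judgment
`Respects(P(v) ⇓ v', φ)` holds: every recursive call performed in the
evaluation is consistent with `φ`. -/
theorem sat_implies_respects (φ : Spec) (body : Expr) (hsat : Sat body φ)
    (v v' : Val) (h : Eval body v body v') : Respects φ body v body v' :=
  h.respects fun _ _ => hsat.sat_of_eval
end

section
/- Standard satisfaction implies angelic satisfaction: if a terminating program P = rec f(x) = e satisfies a ground specification φ under the standard semantics, then P angelically satisfies φ, i.e., for every input v, there exists a value v' such that v' is an angelic result of P on v relative to φ and f(v) = v' is consistent with φ. -/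
theorem Eval.det {body : Expr} {env : Val} {e : Expr} {v : Val}
    (h : Eval body env e v) : ∀ {v'}, Eval body env e v' → v = v' := by
  induction h with
  | var => intro v' h'; cases h'; rfl
  | app h1 h2 ih1 ih2 => intro v' h'; cases h' with
    | app g1 g2 => cases ih1 g1; exact ih2 g2
  | unit => intro v' h'; cases h'; rfl
  | pair h1 h2 ih1 ih2 => intro v' h'; cases h' with
    | pair g1 g2 => rw [ih1 g1, ih2 g2]
  | fst h1 ih1 => intro v' h'; cases h' with
    | fst g1 => cases ih1 g1; rfl
  | snd h1 ih1 => intro v' h'; cases h' with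
    | snd g1 => cases ih1 g1; rfl
  | inl h1 ih1 => intro v' h'; cases h' with
    | inl g1 => rw [ih1 g1]
  | inr h1 ih1 => intro v' h'; cases h' with
    | inr g1 => rw [ih1 g1]
  | unl h1 ih1 => intro v' h'; cases h' with
    | unl g1 => cases ih1 g1; rfl
  | unr h1 ih1 => intro v' h'; cases h' with
    | unr g1 => cases ih1 g1; rfl
  | switchL h1 h2 ih1 ih2 => intro v' h'; cases h' with
    | switchL g1 g2 => exact ih2 g2
    | switchR g1 g2 => cases ih1 g1
  | switchR h1 h2 ih1 ih2 => intro v' h'; cases h' with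
    | switchL g1 g2 => cases ih1 g1
    | switchR g1 g2 => exact ih2 g2

theorem Eval.toAEval {body : Expr} {φ : Spec} {F : Val → Val}
    (hF : Agrees body F) (hφ : φ F) {env e v} (h : Eval body env e v) :
    AEval φ env e v := by
  induction h with
  | var => exact .var
  | app h1 h2 ih1 _ =>
      exact .app ih1 ⟨F, hφ, Eval.det (hF _) h2⟩
  | unit => exact .unit
  | pair _ _ ih1 ih2 => exact .pair ih1 ih2
  | fst _ ih => exact .fst ih
  | snd _ ih => exact .snd ih
  | inl _ ih => exact .inl ih
  | inr _ ih => exact .inr ih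
  | unl _ ih => exact .unl ih
  | unr _ ih => exact .unr ih
  | switchL _ _ ih1 ih2 => exact .switchL ih1 ih2
  | switchR _ _ ih1 ih2 => exact .switchR ih1 ih2

/-- Standard satisfaction implies angelic satisfaction: if a
terminating program `P = rec f(x) = body` satisfies the ground specification
`φ` under the standard semantics, then `P` angelically satisfies `φ`: for
every input `v` there exists `v'` such that `v' ∈ ⟦P⟧^φ(v)` and
`SAT(f(v) = v' ∧ φ)`. -/
theorem sat_implies_angelicSat (φ : Spec) (body : Expr) (hsat : Sat body φ) :
    ∀ v : Val, ∃ v' : Val, AEval φ v body v' ∧ φ.sat v v' := by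
  obtain ⟨F, hF, hφ⟩ := hsat
  exact fun v => ⟨F v, Eval.toAEval hF hφ (hF v), F, hφ, rfl⟩
end

section
/- Angelic satisfaction is strictly weaker than standard satisfaction: there exist a program P and ground specification φ such that P angelically satisfies φ but P does not satisfy φ under the standard semantics. Concretely, the program rec f(x) = if x = 0 then 1 else f(x-1) over natural numbers with specification f(0) > 0 ∧ f(1) > 1 angelically satisfies the specification but does not satisfy it under standard semantics. -/
/-- Expressions over natural numbers with constants, predecessor,
a recursive call `f`, and a zero-test conditional. -/
inductive NExpr : Type
  | var   : NExpr
  | const : ℕ → NExpr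
  | pred  : NExpr → NExpr
  | call  : NExpr → NExpr
  | ifz   : NExpr → NExpr → NExpr → NExpr

/-- Standard big-step semantics for `rec f(x) = body`. -/
inductive NEval (body : NExpr) : ℕ → NExpr → ℕ → Prop
  | var {env} : NEval body env .var env
  | const {env n} : NEval body env (.const n) n
  | pred {env e n} : NEval body env e n → NEval body env (.pred e) (n - 1)
  | call {env e n m} : NEval body env e n → NEval body n body m →
      NEval body env (.call e) m
  | ifzT {env c t f v} : NEval body env c 0 → NEval body env t v →
      NEval body env (.ifz c t f) v
  | ifzF {env c t f n v} : NEval body env c n → n ≠ 0 → NEval body env f v →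
      NEval body env (.ifz c t f) v

/-- Ground specifications over the uninterpreted symbol `f`, as sets of models. -/
def NSpec : Type := (ℕ → ℕ) → Prop

/-- `SAT(φ ∧ f(v) = v')`. -/
def NSpec.sat (φ : NSpec) (v v' : ℕ) : Prop := ∃ g : ℕ → ℕ, φ g ∧ g v = v'

/-- Angelic big-step semantics relative to `φ`: a recursive call `f(v)` may
return any value `v'` such that `φ ∧ f(v) = v'` is satisfiable. -/
inductive NAEval (φ : NSpec) : ℕ → NExpr → ℕ → Prop
  | var {env} : NAEval φ env .var env
  | const {env n} : NAEval φ env (.const n) n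
  | pred {env e n} : NAEval φ env e n → NAEval φ env (.pred e) (n - 1)
  | call {env e n m} : NAEval φ env e n → φ.sat n m → NAEval φ env (.call e) m
  | ifzT {env c t f v} : NAEval φ env c 0 → NAEval φ env t v →
      NAEval φ env (.ifz c t f) v
  | ifzF {env c t f n v} : NAEval φ env c n → n ≠ 0 → NAEval φ env f v →
      NAEval φ env (.ifz c t f) v

/-- The program `rec f(x) = if x = 0 then 1 else f(x - 1)`. -/
def exBody : NExpr := .ifz .var (.const 1) (.call (.pred .var))

/-- The ground specification `f(0) > 0 ∧ f(1) > 1`. -/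
def exSpec : NSpec := fun g => g 0 > 0 ∧ g 1 > 1

lemma neval_det {body : NExpr} : ∀ {env e n}, NEval body env e n →
    ∀ {n'}, NEval body env e n' → n = n' := by
  intro env e n h
  induction h with
  | var => intro n' h'; cases h'; rfl
  | const => intro n' h'; cases h'; rfl
  | pred _ ih => intro n' h'; cases h' with
    | pred h2 => rw [ih h2]
  | call _ _ ih1 ih2 =>
    intro n' h'; cases h' with
    | call h2 h3 => exact ih2 (ih1 h2 ▸ h3)
  | ifzT _ _ ihc iht =>
    intro n' h'
    cases h' with
    | ifzT _ h2 => exact iht h2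
    | ifzF hc hn _ => exact absurd (ihc hc).symm hn
  | ifzF _ hn _ ihc ihf =>
    intro n' h'
    cases h' with
    | ifzT hc _ => exact absurd (ihc hc) hn
    | ifzF _ _ h2 => exact ihf h2

/-- Angelic satisfaction is strictly weaker than standard
satisfaction: the program `rec f(x) = if x = 0 then 1 else f(x-1)` with
specification `f(0) > 0 ∧ f(1) > 1` angelically satisfies the specification
(for every input `v` there is an angelic result consistent with the spec),
but does not satisfy it under the standard semantics. -/
theorem angelic_strictly_weaker :
    (∀ v : ℕ, ∃ v' : ℕ, NAEval exSpec v exBody v' ∧ exSpec.sat v v') ∧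
    (∀ F : ℕ → ℕ, (∀ v, NEval exBody v exBody (F v)) → ¬ exSpec F) := by
  constructor
  · intro v
    refine ⟨v + 1, ?_, fun x => x + 1, ⟨one_pos, one_lt_two⟩, rfl⟩
    rcases Nat.eq_zero_or_pos v with rfl | hv
    · exact .ifzT .var .const
    · refine .ifzF .var (by omega) (.call (.pred .var) ?_)
      refine ⟨fun x => if x = v - 1 then v + 1 else x + 1, ⟨?_, ?_⟩, by simp⟩
      · dsimp; split <;> omega
      · dsimp; split <;> omega
  · intro F hF hspec
    have h1 : NEval exBody 1 exBody 1 :=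
      .ifzF .var one_ne_zero (.call (.pred .var) (.ifzT .var .const))
    have := neval_det (hF 1) h1
    have := hspec.2
    omega
end

section
/- Soundness of the angelic FTA construction (run-level lemma): let A = BuildAngelicFTA(v_in, φ) be the finite tree automaton constructed by the inference rules of the paper, and let (T, L) be a run of a program AST T on A such that L(root(T)) ≠ ⊥. Then T[v_in/x] evaluates under the angelic semantics relative to φ to the value v, where L(root(T)) = q_v. -/
/-- FTA states of `BuildAngelicFTA(v_in, φ)`: either a value state `q_v`
(`some v`) or the special unevaluated state `⊥` (`none`). -/
abbrev FTAState : Type := Option Val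

/-- Runs of the FTA `BuildAngelicFTA(vin, φ)` on program ASTs: `Run φ vin T s`
holds iff there is a labeling of the AST `T` whose root is labeled `s` and in
which every node's transition is a transition of the FTA built by the
inference rules (Init, Unit, Pair, Fst, Snd, Inl, Inr, Unl, Unr,
Angelic Recursion, Switch Left/Right, and the Uneval rules for `⊥`). -/
inductive Run (φ : Spec) (vin : Val) : Expr → FTAState → Prop
  | var : Run φ vin .var (some vin)
  | app {e v1 v2} : Run φ vin e (some v1) → φ.sat v1 v2 →
      Run φ vin (.app e) (some v2)
  | unit : Run φ vin .unit (some .unit)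
  | pair {e1 e2 v1 v2} : Run φ vin e1 (some v1) → Run φ vin e2 (some v2) →
      Run φ vin (.pair e1 e2) (some (.pair v1 v2))
  | fst {e v1 v2} : Run φ vin e (some (.pair v1 v2)) → Run φ vin (.fst e) (some v1)
  | snd {e v1 v2} : Run φ vin e (some (.pair v1 v2)) → Run φ vin (.snd e) (some v2)
  | inl {e v} : Run φ vin e (some v) → Run φ vin (.inl e) (some (.inl v))
  | inr {e v} : Run φ vin e (some v) → Run φ vin (.inr e) (some (.inr v))
  | unl {e v} : Run φ vin e (some (.inl v)) → Run φ vin (.unl e) (some v)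
  | unr {e v} : Run φ vin e (some (.inr v)) → Run φ vin (.unr e) (some v)
  | switchL {e3 e1 e2 v3 v1} : Run φ vin e3 (some (.inl v3)) →
      Run φ vin e1 (some v1) → Run φ vin e2 none →
      Run φ vin (.switch e3 e1 e2) (some v1)
  | switchR {e3 e1 e2 v3 v2} : Run φ vin e3 (some (.inr v3)) →
      Run φ vin e1 none → Run φ vin e2 (some v2) →
      Run φ vin (.switch e3 e1 e2) (some v2)
  | bot_var : Run φ vin .var none
  | bot_unit : Run φ vin .unit none
  | bot_app {e} : Run φ vin e none → Run φ vin (.app e) none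
  | bot_pair {e1 e2} : Run φ vin e1 none → Run φ vin e2 none →
      Run φ vin (.pair e1 e2) none
  | bot_fst {e} : Run φ vin e none → Run φ vin (.fst e) none
  | bot_snd {e} : Run φ vin e none → Run φ vin (.snd e) none
  | bot_inl {e} : Run φ vin e none → Run φ vin (.inl e) none
  | bot_inr {e} : Run φ vin e none → Run φ vin (.inr e) none
  | bot_unl {e} : Run φ vin e none → Run φ vin (.unl e) none
  | bot_unr {e} : Run φ vin e none → Run φ vin (.unr e) none
  | bot_switch {e3 e1 e2} : Run φ vin e3 none → Run φ vin e1 none →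
      Run φ vin e2 none → Run φ vin (.switch e3 e1 e2) none

/-- `P ∈ L(BuildAngelicFTA(vin, φ))`: some run of `P` ends in a final
state, i.e. a state `q_v` with `SAT(φ ∧ f(vin) = v)`. -/
def AcceptsFTA (φ : Spec) (vin : Val) (P : Expr) : Prop :=
  ∃ v : Val, Run φ vin P (some v) ∧ φ.sat vin v

theorem run_sound_aux {φ : Spec} {vin : Val} {T : Expr} {s : FTAState}
    (h : Run φ vin T s) : ∀ v, s = some v → AEval φ vin T v := by
  induction h with
  | var => rintro v ⟨rfl⟩; exact .var
  | app h hs ih => rintro v ⟨rfl⟩; exact .app (ih _ rfl) hs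
  | unit => rintro v ⟨rfl⟩; exact .unit
  | pair h1 h2 ih1 ih2 => rintro v ⟨rfl⟩; exact .pair (ih1 _ rfl) (ih2 _ rfl)
  | fst h ih => rintro v ⟨rfl⟩; exact .fst (ih _ rfl)
  | snd h ih => rintro v ⟨rfl⟩; exact .snd (ih _ rfl)
  | inl h ih => rintro v ⟨rfl⟩; exact .inl (ih _ rfl)
  | inr h ih => rintro v ⟨rfl⟩; exact .inr (ih _ rfl)
  | unl h ih => rintro v ⟨rfl⟩; exact .unl (ih _ rfl)
  | unr h ih => rintro v ⟨rfl⟩; exact .unr (ih _ rfl)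
  | switchL h3 h1 h2 ih3 ih1 ih2 => rintro v ⟨rfl⟩; exact .switchL (ih3 _ rfl) (ih1 _ rfl)
  | switchR h3 h1 h2 ih3 ih1 ih2 => rintro v ⟨rfl⟩; exact .switchR (ih3 _ rfl) (ih2 _ rfl)
  | _ => rintro v ⟨⟩

/-- run-level soundness of the angelic FTA construction.
Let `A = BuildAngelicFTA(vin, φ)` and let `(T, L)` be a run of the program
AST `T` on `A` with `L(root T) ≠ ⊥`, say `L(root T) = q_v`.  Then
`T[vin/x]` evaluates to `v` under the angelic semantics relative to `φ`. -/
theorem run_sound (φ : Spec) (vin : Val) (T : Expr) (v : Val)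
    (h : Run φ vin T (some v)) : AEval φ vin T v := by
  exact run_sound_aux h v rfl
end

section
/- Soundness of the top-level synthesis algorithm: if the Synthesize procedure (Algorithm 1) returns a program P on input ground specification χ, then P ⊨ χ under the standard semantics. -/
/-- Conjunction of ground specifications. -/
def Spec.and (φ ψ : Spec) : Spec := fun g => φ g ∧ ψ g

/-- Negation of a ground specification. -/
def Spec.neg (φ : Spec) : Spec := fun g => ¬ φ g

/-- The specification `χ ∧ ⋀_{φ ∈ Ω} ¬φ` used by the algorithm, where `Ω`
is the global anti-specification set. -/
def strengthen (χ : Spec) (Ω : Set Spec) : Spec :=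
  fun g => χ g ∧ ∀ φ ∈ Ω, ¬ φ g

/-- Result of the angelic synthesizer: either failure together with an
anti-specification `κ`, or success with a candidate program `P` and a
witness `ω` to angelic satisfaction. -/
inductive SAResult : Type
  | failure : Set Spec → SAResult
  | success : Expr → Spec → SAResult

/-- The top-level backtracking synthesis algorithm (Algorithm 1),
parameterized by the angelic synthesizer `SA`, formalized as an inductive
relation `Synth SA χ Ω result Ω'` relating the input specification `χ`,
the incoming global anti-specification `Ω`, the returned result (`some P`
or `⊥ = none`) and the outgoing global anti-specification `Ω'`. -/
inductive Synth (SA : Spec → SAResult) : Spec → Set Spec → Option Expr → Set Spec → Prop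
  | fail {χ Ω κ} :
      SA (strengthen χ Ω) = .failure κ →
      Synth SA χ Ω none (Ω ∪ κ)
  | found {χ Ω P ω} :
      SA (strengthen χ Ω) = .success P ω →
      Sat P χ →
      Synth SA χ Ω (some P) Ω
  | recSuccess {χ Ω P ω P' Ω'} :
      SA (strengthen χ Ω) = .success P ω →
      ¬ Sat P χ →
      Synth SA (χ.and ω) Ω (some P') Ω' →
      Synth SA χ Ω (some P') Ω'
  | recBacktrack {χ Ω P ω Ω' r Ω''} :
      SA (strengthen χ Ω) = .success P ω →
      ¬ Sat P χ →
      Synth SA (χ.and ω) Ω none Ω' →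
      Synth SA (χ.and ω.neg) Ω' r Ω'' →
      Synth SA χ Ω r Ω''

/-- soundness of the top-level synthesis algorithm.
If `Synthesize` returns a program `P` on input ground specification `χ`,
then `P ⊨ χ` under the standard semantics. -/
theorem synthesize_sound (SA : Spec → SAResult) (χ : Spec) (Ω Ω' : Set Spec)
    (P : Expr) (h : Synth SA χ Ω (some P) Ω') : Sat P χ := by
  have key : ∀ (ψ : Spec) (Ω₁ Ω₂ : Set Spec) (r : Option Expr),
      Synth SA ψ Ω₁ r Ω₂ → ∀ Q, r = some Q → Sat Q ψ := by
    intro ψ Ω₁ Ω₂ r h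
    induction h with
    | fail _ => intro Q hQ; cases hQ
    | found _ hc => intro Q hQ; cases hQ; exact hc
    | recSuccess _ _ _ ih =>
        intro Q hQ
        obtain ⟨F, hF, hφ⟩ := ih Q hQ
        exact ⟨F, hF, hφ.1⟩
    | recBacktrack _ _ _ _ _ ih =>
        intro Q hQ
        obtain ⟨F, hF, hφ⟩ := ih Q hQ
        exact ⟨F, hF, hφ.1⟩
  exact key χ Ω Ω' (some P) h P rfl
end
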